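/- arXiv:2409.20022 — 8 statements merged into one kernel-verified Lean document; each statement's English description precedes it below -/
import Mathlib

section
/- Define u₊ : ℝ → ℂ² by u₊(t) = √(3/8)·(1, −t), and u₋ = σ₁·u₊. Then: (i) for all t, −i·σ₂·u₊'(t) + (−1/2)·σ₃·u₊(t) = (1/2)·u₊(t) and −i·σ₂·u₋'(t) + (−1/2)·σ₃·u₋(t) = (−1/2)·u₋(t); (ii) both u₊ and u₋ satisfy the infinite mass boundary conditions σ₁φ(−1) = φ(−1) and σ₁φ(1) = −φ(1); (iii) ∫_{−1}^{1} ‖u₊(t)‖² dt = 1 and ∫_{−1}^{1} ‖u₋(t)‖² dt = 1. -/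
open Matrix Complex

/-- The Pauli matrix σ₁. -/
noncomputable def σ1 : Matrix (Fin 2) (Fin 2) ℂ := !![0, 1; 1, 0]
/-- The Pauli matrix σ₂. -/
noncomputable def σ2 : Matrix (Fin 2) (Fin 2) ℂ := !![0, -Complex.I; Complex.I, 0]
/-- The Pauli matrix σ₃. -/
noncomputable def σ3 : Matrix (Fin 2) (Fin 2) ℂ := !![1, 0; 0, -1]

/-- `u₊(t) = √(3/8)·(1, −t)`. -/
noncomputable def uplus : ℝ → Fin 2 → ℂ :=
  fun t => (Real.sqrt (3 / 8) : ℂ) • ![1, -(t : ℂ)]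

/-- `u₋ = σ₁·u₊`. -/
noncomputable def uminus : ℝ → Fin 2 → ℂ := fun t => σ1.mulVec (uplus t)

lemma deriv_uplus (t : ℝ) : deriv uplus t = ![0, -(Real.sqrt (3 / 8) : ℂ)] := by
  apply HasDerivAt.deriv
  rw [hasDerivAt_pi]
  intro i
  fin_cases i
  · simpa [uplus] using (hasDerivAt_const t ((Real.sqrt (3 / 8) : ℂ))).congr_deriv rfl
  · have : HasDerivAt (fun x : ℝ => (Real.sqrt (3 / 8) : ℂ) * (-(x : ℂ)))
        ((Real.sqrt (3 / 8) : ℂ) * (-1)) t := by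
      have h : HasDerivAt (fun x : ℝ => (x : ℂ)) 1 t := Complex.ofRealCLM.hasDerivAt
      simpa using ((h.neg).const_mul ((Real.sqrt (3 / 8) : ℂ)))
    simpa [uplus, Matrix.smul_cons] using this

lemma uminus_eq (t : ℝ) : uminus t = ![(Real.sqrt (3 / 8) : ℂ) * (-(t:ℂ)), (Real.sqrt (3 / 8) : ℂ)] := by
  funext i
  fin_cases i <;> simp [uminus, uplus, σ1, Matrix.mulVec, dotProduct, Fin.sum_univ_two]

lemma deriv_uminus (t : ℝ) : deriv uminus t = ![-(Real.sqrt (3 / 8) : ℂ), 0] := by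
  apply HasDerivAt.deriv
  rw [hasDerivAt_pi]
  intro i
  have huq : uminus = fun t : ℝ => ![(Real.sqrt (3 / 8) : ℂ) * (-(t:ℂ)), (Real.sqrt (3 / 8) : ℂ)] :=
    funext uminus_eq
  rw [huq]
  fin_cases i
  · have h : HasDerivAt (fun x : ℝ => (x : ℂ)) 1 t := Complex.ofRealCLM.hasDerivAt
    simpa using ((h.neg).const_mul ((Real.sqrt (3 / 8) : ℂ)))
  · simpa using (hasDerivAt_const t ((Real.sqrt (3 / 8) : ℂ)))

lemma integrand_uplus (t : ℝ) :
    ‖uplus t 0‖ ^ 2 + ‖uplus t 1‖ ^ 2 = 3/8 + 3/8 * t ^ 2 := by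
  have h8 : (0:ℝ) ≤ 3/8 := by norm_num
  have hsq : Real.sqrt (3/8) ^ 2 = 3/8 := Real.sq_sqrt h8
  have h0 : uplus t 0 = ((Real.sqrt (3/8) : ℝ) : ℂ) := by simp [uplus]
  have h1 : uplus t 1 = ((-(Real.sqrt (3/8) * t) : ℝ) : ℂ) := by
    simp [uplus]
  rw [h0, h1, Complex.norm_real, Complex.norm_real, Real.norm_eq_abs,
    Real.norm_eq_abs, _root_.sq_abs, _root_.sq_abs]
  nlinarith [hsq]

lemma integrand_uminus (t : ℝ) :
    ‖uminus t 0‖ ^ 2 + ‖uminus t 1‖ ^ 2 = 3/8 + 3/8 * t ^ 2 := by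
  have := integrand_uplus t
  have h0 : uminus t 0 = uplus t 1 := by
    simp [uminus, σ1, Matrix.mulVec, dotProduct, Fin.sum_univ_two]
  have h1 : uminus t 1 = uplus t 0 := by
    simp [uminus, σ1, Matrix.mulVec, dotProduct, Fin.sum_univ_two]
  rw [h0, h1]; linarith

lemma integral_val : (∫ t in (-1 : ℝ)..1, (3/8 + 3/8 * t ^ 2)) = 1 := by
  rw [intervalIntegral.integral_add (intervalIntegrable_const)
    ((intervalIntegral.intervalIntegrable_pow 2).const_mul (3/8 : ℝ)),
    intervalIntegral.integral_const, intervalIntegral.integral_const_mul,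
    integral_pow]
  norm_num

/-- `u₊` and `u₋` are normalized eigenvectors of the transverse Dirac operator
with mass `μ = -1/2`, for the eigenvalues `±1/2`, satisfying the infinite mass
boundary conditions. -/
theorem uplus_uminus_eigenvectors :
    (∀ t : ℝ,
      (-Complex.I) • σ2.mulVec (deriv uplus t)
          + (((-1 : ℝ) / 2 : ℝ) : ℂ) • σ3.mulVec (uplus t)
        = ((1 / 2 : ℝ) : ℂ) • uplus t ∧
      (-Complex.I) • σ2.mulVec (deriv uminus t)
          + (((-1 : ℝ) / 2 : ℝ) : ℂ) • σ3.mulVec (uminus t)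
        = (((-1 : ℝ) / 2 : ℝ) : ℂ) • uminus t) ∧
    (σ1.mulVec (uplus (-1)) = uplus (-1) ∧ σ1.mulVec (uplus 1) = -uplus 1 ∧
      σ1.mulVec (uminus (-1)) = uminus (-1) ∧ σ1.mulVec (uminus 1) = -uminus 1) ∧
    ((∫ t in (-1 : ℝ)..1, (‖uplus t 0‖ ^ 2 + ‖uplus t 1‖ ^ 2)) = 1 ∧
      (∫ t in (-1 : ℝ)..1, (‖uminus t 0‖ ^ 2 + ‖uminus t 1‖ ^ 2)) = 1) := by
  refine ⟨fun t => ⟨?_, ?_⟩, ⟨?_, ?_, ?_, ?_⟩, ?_, ?_⟩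
  · funext i; fin_cases i <;>
    · simp [deriv_uplus, uplus, σ2, σ3, Matrix.mulVec, dotProduct,
        Fin.sum_univ_two, Complex.ext_iff] <;> ring
  · funext i; fin_cases i <;>
    · simp [deriv_uminus, uminus_eq, σ2, σ3, Matrix.mulVec, dotProduct,
        Fin.sum_univ_two, Complex.ext_iff] <;> ring
  · funext i; fin_cases i <;>
      simp [uplus, σ1, Matrix.mulVec, dotProduct, Fin.sum_univ_two]
  · funext i; fin_cases i <;>
      simp [uplus, σ1, Matrix.mulVec, dotProduct, Fin.sum_univ_two]
  · funext i; fin_cases i <;>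
      simp [uminus_eq, uplus, σ1, Matrix.mulVec, dotProduct, Fin.sum_univ_two]
  · funext i; fin_cases i <;>
      simp [uminus_eq, uplus, σ1, Matrix.mulVec, dotProduct, Fin.sum_univ_two]
  · rw [show (fun t : ℝ => ‖uplus t 0‖ ^ 2 + ‖uplus t 1‖ ^ 2)
        = fun t : ℝ => 3/8 + 3/8 * t ^ 2 from funext integrand_uplus]
    exact integral_val
  · rw [show (fun t : ℝ => ‖uminus t 0‖ ^ 2 + ‖uminus t 1‖ ^ 2)
        = fun t : ℝ => 3/8 + 3/8 * t ^ 2 from funext integrand_uminus]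
    exact integral_val
end

section
/- Let μ, λ ∈ ℝ with λ² = μ². Suppose φ : ℝ → ℂ² is differentiable, is not identically zero on [−1,1], satisfies −i·σ₂·φ'(t) + μ·σ₃·φ(t) = λ·φ(t) for all t ∈ [−1,1], and satisfies the infinite mass boundary conditions σ₁φ(−1) = φ(−1) and σ₁φ(1) = −φ(1). Then μ = −1/2 and λ ∈ {1/2, −1/2}. -/
open Matrix Complex

/-- A differentiable function whose derivative is constant on `[-1,1]` is affine there. -/
lemma affine_aux (f : ℝ → ℂ) (hf : Differentiable ℝ f) (c : ℂ)
    (h : ∀ t ∈ Set.Icc (-1:ℝ) 1, deriv f t = c) :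
    ∀ t ∈ Set.Icc (-1:ℝ) 1, f t = f (-1) + ((t:ℂ) + 1) * c := by
  have hgd : ∀ s : ℝ, HasDerivAt (fun x : ℝ => f x - (x:ℂ) * c)
      (deriv f s - c) s := by
    intro s
    have h1 : HasDerivAt (fun x : ℝ => (x:ℂ) * c) c s := by
      simpa using (Complex.ofRealCLM.hasDerivAt (x := s)).mul_const c
    exact (hf s).hasDerivAt.sub h1
  have key : ∀ t ∈ Set.Icc (-1:ℝ) 1,
      f t - (t:ℂ) * c = f (-1) - ((-1 : ℝ):ℂ) * c := by
    apply constant_of_has_deriv_right_zero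
    · exact Continuous.continuousOn (by
        have : Continuous (fun x : ℝ => f x - (x:ℂ) * c) := by
          exact hf.continuous.sub ((Complex.continuous_ofReal).mul continuous_const)
        exact this)
    · intro x hx
      have hxmem : x ∈ Set.Icc (-1:ℝ) 1 := Set.Ico_subset_Icc_self hx
      have := hgd x
      rw [h x hxmem, sub_self] at this
      exact this.hasDerivWithinAt
  intro t ht
  have := key t ht
  push_cast at this ⊢
  linear_combination this

/-- Degenerate case `k = 0` of the transverse eigenvalue problem: if `λ² = μ²` and a
nontrivial eigenfunction with the infinite mass boundary conditions exists, then
`μ = -1/2` and `λ = ±1/2`. -/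
theorem transverse_eigen_degenerate (μ lam : ℝ) (hk : lam ^ 2 = μ ^ 2)
    (φ : ℝ → Fin 2 → ℂ) (hφ : Differentiable ℝ φ)
    (hne : ∃ t ∈ Set.Icc (-1 : ℝ) 1, φ t ≠ 0)
    (heig : ∀ t ∈ Set.Icc (-1 : ℝ) 1,
      (-Complex.I) • σ2.mulVec (deriv φ t) + (μ : ℂ) • σ3.mulVec (φ t)
        = (lam : ℂ) • φ t)
    (hbc1 : σ1.mulVec (φ (-1)) = φ (-1))
    (hbc2 : σ1.mulVec (φ 1) = -φ 1) :
    μ = -1 / 2 ∧ (lam = 1 / 2 ∨ lam = -1 / 2) := by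
  -- component derivatives
  have hd : ∀ (i : Fin 2) (t : ℝ), HasDerivAt (fun s => φ s i) (deriv φ t i) t :=
    fun i t => hasDerivAt_pi.mp (hφ t).hasDerivAt i
  have hdiff : ∀ i : Fin 2, Differentiable ℝ (fun s => φ s i) :=
    fun i t => (hd i t).differentiableAt
  have hderiv : ∀ (i : Fin 2) (t : ℝ), deriv (fun s => φ s i) t = deriv φ t i :=
    fun i t => (hd i t).deriv
  -- scalar form of the eigenvalue equation
  have hE1 : ∀ t ∈ Set.Icc (-1:ℝ) 1, deriv φ t 1 = ((μ:ℂ) - lam) * φ t 0 := by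
    intro t ht
    have h := congrFun (heig t ht) 0
    simp [σ2, σ3, Matrix.mulVec, dotProduct, Fin.sum_univ_two] at h
    have hI : (Complex.I : ℂ) * Complex.I = -1 := Complex.I_mul_I
    linear_combination -h + deriv φ t 1 * hI
  have hE0 : ∀ t ∈ Set.Icc (-1:ℝ) 1, deriv φ t 0 = ((lam:ℂ) + μ) * φ t 1 := by
    intro t ht
    have h := congrFun (heig t ht) 1
    simp [σ2, σ3, Matrix.mulVec, dotProduct, Fin.sum_univ_two] at h
    have hI : (Complex.I : ℂ) * Complex.I = -1 := Complex.I_mul_I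
    linear_combination h + deriv φ t 0 * hI
  -- boundary conditions componentwise
  have hb1 : φ (-1) 1 = φ (-1) 0 := by
    have h := congrFun hbc1 0
    simpa [σ1, Matrix.mulVec, dotProduct, Fin.sum_univ_two] using h
  have hb2 : φ 1 1 = -φ 1 0 := by
    have h := congrFun hbc2 0
    simpa [σ1, Matrix.mulVec, dotProduct, Fin.sum_univ_two] using h
  have hmem1 : (-1:ℝ) ∈ Set.Icc (-1:ℝ) 1 := by constructor <;> norm_num
  have hmem2 : (1:ℝ) ∈ Set.Icc (-1:ℝ) 1 := by constructor <;> norm_num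
  have hcase : lam = μ ∨ lam = -μ := by
    have h0 : (lam - μ) * (lam + μ) = 0 := by nlinarith
    rcases mul_eq_zero.mp h0 with h | h
    · left; linarith
    · right; linarith
  obtain h | h := hcase
  · -- lam = μ : v is constant, u is affine
    have hv : ∀ t ∈ Set.Icc (-1:ℝ) 1, φ t 1 = φ (-1) 1 := by
      have := affine_aux (fun s => φ s 1) (hdiff 1) 0 (by
        intro t ht
        rw [hderiv 1 t, hE1 t ht, h]
        ring)
      intro t ht; simpa using this t ht
    have hu : ∀ t ∈ Set.Icc (-1:ℝ) 1,
        φ t 0 = φ (-1) 0 + ((t:ℂ) + 1) * (((μ:ℂ) + μ) * φ (-1) 1) := by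
      apply affine_aux (fun s => φ s 0) (hdiff 0)
      intro t ht
      rw [hderiv 0 t, hE0 t ht, hv t ht, h]
    set a : ℂ := φ (-1) 0 with ha
    have hva : φ (-1) 1 = a := hb1
    have hu1 : φ 1 0 = a + 2 * ((2*μ) * a) := by
      have := hu 1 hmem2
      rw [hva] at this
      push_cast at this ⊢
      linear_combination this
    have hv1 : φ 1 1 = a := by rw [hv 1 hmem2, hva]
    have hkey : a * (2 + 4*μ) = 0 := by
      have h2 := hb2
      rw [hv1, hu1] at h2
      linear_combination h2
    rcases mul_eq_zero.mp hkey with h0 | h0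
    · exfalso
      obtain ⟨t, ht, htne⟩ := hne
      apply htne
      funext i
      fin_cases i
      · show φ t 0 = 0
        rw [hu t ht, hva, h0]; ring
      · show φ t 1 = 0
        rw [hv t ht, hva, h0]
    · have hre : (2 + 4*μ : ℝ) = 0 := by exact_mod_cast h0
      have hmu : μ = -1/2 := by linarith
      exact ⟨hmu, Or.inr (by rw [h, hmu])⟩
  · -- lam = -μ : u is constant, v is affine
    have hu : ∀ t ∈ Set.Icc (-1:ℝ) 1, φ t 0 = φ (-1) 0 := by
      have := affine_aux (fun s => φ s 0) (hdiff 0) 0 (by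
        intro t ht
        rw [hderiv 0 t, hE0 t ht, h]
        push_cast; ring)
      intro t ht; simpa using this t ht
    have hv : ∀ t ∈ Set.Icc (-1:ℝ) 1,
        φ t 1 = φ (-1) 1 + ((t:ℂ) + 1) * (((μ:ℂ) + μ) * φ (-1) 0) := by
      apply affine_aux (fun s => φ s 1) (hdiff 1)
      intro t ht
      rw [hderiv 1 t, hE1 t ht, hu t ht, h]
      push_cast; ring
    set a : ℂ := φ (-1) 0 with ha
    have hva : φ (-1) 1 = a := hb1
    have hv1 : φ 1 1 = a + 2 * ((2*μ) * a) := by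
      have := hv 1 hmem2
      rw [hva] at this
      push_cast at this ⊢
      linear_combination this
    have hu1 : φ 1 0 = a := hu 1 hmem2
    have hkey : a * (2 + 4*μ) = 0 := by
      have h2 := hb2
      rw [hv1, hu1] at h2
      linear_combination h2
    rcases mul_eq_zero.mp hkey with h0 | h0
    · exfalso
      obtain ⟨t, ht, htne⟩ := hne
      apply htne
      funext i
      fin_cases i
      · show φ t 0 = 0
        rw [hu t ht]; exact h0
      · show φ t 1 = 0
        rw [hv t ht, hva, h0]; ring
    · have hre : (2 + 4*μ : ℝ) = 0 := by exact_mod_cast h0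
      have hmu : μ = -1/2 := by linarith
      refine ⟨hmu, Or.inl ?_⟩
      rw [h, hmu]; norm_num
end

section
/- Let μ, λ ∈ ℝ with λ² < μ², and set k̃ = √(μ² − λ²) > 0. Suppose φ : ℝ → ℂ² is differentiable, is not identically zero on [−1,1], satisfies −i·σ₂·φ'(t) + μ·σ₃·φ(t) = λ·φ(t) for all t ∈ [−1,1], and satisfies the infinite mass boundary conditions σ₁φ(−1) = φ(−1) and σ₁φ(1) = −φ(1). Then μ·tanh(2k̃) = −k̃, and consequently μ < −1/2. -/
open Matrix Complex

/-- Solutions of `h' = c h` on an interval are exponentials (expressed via an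
invariant quantity). -/
lemma expODE_aux {c : ℝ} {h : ℝ → ℂ} (hcont : Continuous h)
    (hd : ∀ t ∈ Set.Icc (-1 : ℝ) 1, HasDerivAt h ((c : ℂ) * h t) t) :
    ∀ t ∈ Set.Icc (-1 : ℝ) 1,
      h t * (Real.exp (-(c * t)) : ℝ) = h (-1) * (Real.exp (-(c * (-1))) : ℝ) := by
  have hE : ∀ t : ℝ, HasDerivAt (fun s : ℝ => ((Real.exp (-(c * s)) : ℝ) : ℂ))
      (((-c) * Real.exp (-(c * t)) : ℝ) : ℂ) t := by
    intro t
    have h1 : HasDerivAt (fun s : ℝ => -(c * s)) (-c) t := by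
      exact (((hasDerivAt_id t).const_mul c).neg).congr_deriv (by ring)
    have h2 : HasDerivAt (fun s : ℝ => Real.exp (-(c * s)))
        ((-c) * Real.exp (-(c * t))) t := by
      exact ((Real.hasDerivAt_exp (-(c * t))).comp t h1).congr_deriv
        (by ring : _ = (-c) * Real.exp (-(c * t)))
    exact h2.ofReal_comp
  have hg : ∀ t ∈ Set.Icc (-1 : ℝ) 1,
      HasDerivAt (fun s => h s * (Real.exp (-(c * s)) : ℝ)) 0 t := by
    intro t ht
    have := (hd t ht).mul (hE t)
    refine this.congr_deriv ?_
    push_cast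
    ring
  have hgc : ContinuousOn (fun s => h s * ((Real.exp (-(c * s)) : ℝ) : ℂ))
      (Set.Icc (-1 : ℝ) 1) :=
    (hcont.mul (Complex.continuous_ofReal.comp (Real.continuous_exp.comp (by fun_prop)))).continuousOn
  have := constant_of_has_deriv_right_zero hgc
    (fun x hx => (hg x (Set.Ico_subset_Icc_self hx)).hasDerivWithinAt)
  exact this

/-- `tanh`-type bound: `sinh x < x * cosh x` for positive `x`. -/
lemma sinh_lt_mul_cosh {x : ℝ} (hx : 0 < x) : Real.sinh x < x * Real.cosh x := by
  have hmono : StrictMonoOn (fun y : ℝ => y * Real.cosh y - Real.sinh y)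
      (Set.Ici (0 : ℝ)) := by
    apply strictMonoOn_of_deriv_pos (convex_Ici 0)
    · fun_prop
    · intro y hy
      rw [interior_Ici] at hy
      have h1 : HasDerivAt (fun y : ℝ => y * Real.cosh y - Real.sinh y)
          (1 * Real.cosh y + y * Real.sinh y - Real.cosh y) y :=
        ((hasDerivAt_id y).mul (Real.hasDerivAt_cosh y)).sub (Real.hasDerivAt_sinh y)
      rw [h1.deriv]
      have := Real.sinh_pos_iff.mpr hy
      nlinarith [mul_pos hy this]
  have := hmono (Set.self_mem_Ici) (Set.mem_Ici.mpr hx.le) hx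
  simpa using this

/-- Hyperbolic case `k = i·k̃`, `k̃² = μ² − λ² > 0`, of the transverse eigenvalue
problem: a nontrivial eigenfunction with the infinite mass boundary conditions forces
`μ·tanh(2k̃) = −k̃`, whence `μ < −1/2`. -/
theorem transverse_eigen_hyperbolic (μ lam : ℝ) (hk : lam ^ 2 < μ ^ 2)
    (ktilde : ℝ) (hkdef : ktilde = Real.sqrt (μ ^ 2 - lam ^ 2))
    (φ : ℝ → Fin 2 → ℂ) (hφ : Differentiable ℝ φ)
    (hne : ∃ t ∈ Set.Icc (-1 : ℝ) 1, φ t ≠ 0)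
    (heig : ∀ t ∈ Set.Icc (-1 : ℝ) 1,
      (-Complex.I) • σ2.mulVec (deriv φ t) + (μ : ℂ) • σ3.mulVec (φ t)
        = (lam : ℂ) • φ t)
    (hbc1 : σ1.mulVec (φ (-1)) = φ (-1))
    (hbc2 : σ1.mulVec (φ 1) = -φ 1) :
    μ * Real.tanh (2 * ktilde) = -ktilde ∧ μ < -1 / 2 := by
  -- basic facts about `k̃` and `δ = μ + λ`
  have hk2 : ktilde ^ 2 = μ ^ 2 - lam ^ 2 := by
    rw [hkdef]; exact Real.sq_sqrt (by linarith)
  have hkpos : 0 < ktilde := by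
    rw [hkdef]; exact Real.sqrt_pos.mpr (by linarith)
  set δ : ℝ := μ + lam with hδ
  have hδne : δ ≠ 0 := by
    intro h0
    have : lam = -μ := by simp [hδ] at h0; linarith
    rw [this] at hk; nlinarith
  -- component functions
  set u : ℝ → ℂ := fun t => φ t 0 with hu
  set v : ℝ → ℂ := fun t => φ t 1 with hv
  have hud : ∀ t, HasDerivAt u (deriv φ t 0) t := fun t =>
    (hasDerivAt_pi.mp (hφ t).hasDerivAt) 0
  have hvd : ∀ t, HasDerivAt v (deriv φ t 1) t := fun t =>
    (hasDerivAt_pi.mp (hφ t).hasDerivAt) 1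
  -- scalar form of the eigenvalue equation
  have hODE : ∀ t ∈ Set.Icc (-1 : ℝ) 1,
      deriv φ t 0 = (δ : ℂ) * v t ∧ deriv φ t 1 = ((μ - lam : ℝ) : ℂ) * u t := by
    intro t ht
    have h := heig t ht
    have h0 := congrFun h 0
    have h1 := congrFun h 1
    simp [σ2, σ3, Matrix.mulVec, dotProduct, Matrix.vecHead, Matrix.vecTail, Fin.sum_univ_two, ← mul_assoc,
      Complex.I_mul_I] at h0 h1
    constructor
    · simp only [hδ]
      push_cast
      linear_combination h1
    · push_cast
      linear_combination -h0
  -- the functions p = k̃ u + δ v and q = k̃ u − δ v satisfy p' = k̃ p, q' = −k̃ q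
  set p : ℝ → ℂ := fun t => (ktilde : ℂ) * u t + (δ : ℂ) * v t with hp
  set q : ℝ → ℂ := fun t => (ktilde : ℂ) * u t - (δ : ℂ) * v t with hq
  have hδε : (δ : ℂ) * ((μ - lam : ℝ) : ℂ) = (ktilde : ℂ) ^ 2 := by
    push_cast
    rw [hδ]
    push_cast
    have : (ktilde : ℂ) ^ 2 = ((ktilde ^ 2 : ℝ) : ℂ) := by push_cast; ring
    rw [this, hk2]; push_cast; ring
  have hpd : ∀ t ∈ Set.Icc (-1 : ℝ) 1, HasDerivAt p ((ktilde : ℂ) * p t) t := by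
    intro t ht
    obtain ⟨h0, h1⟩ := hODE t ht
    have := (((hud t).const_mul (ktilde : ℂ)).add ((hvd t).const_mul (δ : ℂ)))
    refine this.congr_deriv (Eq.symm ?_)
    rw [h0, h1, hp]
    linear_combination (norm := (push_cast; ring1)) (-(u t)) * hδε
  have hqd : ∀ t ∈ Set.Icc (-1 : ℝ) 1, HasDerivAt q ((-ktilde : ℝ) * q t) t := by
    intro t ht
    obtain ⟨h0, h1⟩ := hODE t ht
    have := (((hud t).const_mul (ktilde : ℂ)).sub ((hvd t).const_mul (δ : ℂ)))
    refine this.congr_deriv (Eq.symm ?_)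
    rw [h0, h1, hq]
    linear_combination (norm := (push_cast; ring1)) (u t) * hδε
  -- continuity
  have hucont : Continuous u := by
    have : Differentiable ℝ u := fun t => (hud t).differentiableAt
    exact this.continuous
  have hvcont : Continuous v := by
    have : Differentiable ℝ v := fun t => (hvd t).differentiableAt
    exact this.continuous
  have hpcont : Continuous p := by
    rw [hp]; fun_prop
  have hqcont : Continuous q := by
    rw [hq]; fun_prop
  -- solve the two ODEs
  have hpsol := expODE_aux hpcont hpd
  have hqsol := expODE_aux (c := -ktilde) hqcont hqd
  -- boundary conditions in scalar form: u(-1) = v(-1), v(1) = -u(1)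
  have hbcl : u (-1) = v (-1) := by
    have := congrFun hbc1 0
    simp [σ1, Matrix.mulVec, dotProduct, Matrix.vecHead, Matrix.vecTail, Fin.sum_univ_two, hu, hv] at this ⊢
    rw [this]
  have hbcr : v 1 = -u 1 := by
    have := congrFun hbc2 0
    simpa [σ1, Matrix.mulVec, dotProduct, Matrix.vecHead, Matrix.vecTail, Fin.sum_univ_two, hu, hv] using this
  -- set a = p(-1), b = q(-1), X = exp(2k̃)
  set a : ℂ := p (-1) with ha
  set b : ℂ := q (-1) with hb
  set X : ℝ := Real.exp (2 * ktilde) with hX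
  have hXpos : 0 < X := Real.exp_pos _
  -- endpoint relations from the ODE solutions
  have hmem1 : (1 : ℝ) ∈ Set.Icc (-1 : ℝ) 1 := by constructor <;> norm_num
  have hXC : (X : ℂ) = Complex.exp (ktilde : ℂ) * Complex.exp (ktilde : ℂ) := by
    rw [hX, ← Complex.exp_add, Complex.ofReal_exp]
    congr 1
    push_cast
    ring
  have hee : Complex.exp (-(ktilde : ℂ)) * Complex.exp (ktilde : ℂ) = 1 := by
    rw [← Complex.exp_add]; simp
  have hp1 : p 1 = a * (X : ℂ) := by
    have h := hpsol 1 hmem1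
    norm_num at h
    -- h : p 1 * cexp (-↑ktilde) = a * cexp ↑ktilde
    calc p 1 = p 1 * (Complex.exp (-(ktilde : ℂ)) * Complex.exp (ktilde : ℂ)) := by
          rw [hee]; ring
      _ = (p 1 * Complex.exp (-(ktilde : ℂ))) * Complex.exp (ktilde : ℂ) := by ring
      _ = (a * Complex.exp (ktilde : ℂ)) * Complex.exp (ktilde : ℂ) := by rw [h]
      _ = a * (X : ℂ) := by rw [hXC]; ring
  have hq1 : q 1 * (X : ℂ) = b := by
    have h := hqsol 1 hmem1
    norm_num at h
    -- h : q 1 * cexp ↑ktilde = b * cexp (-↑ktilde)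
    calc q 1 * (X : ℂ) = (q 1 * Complex.exp (ktilde : ℂ)) * Complex.exp (ktilde : ℂ) := by
          rw [hXC]; ring
      _ = (b * Complex.exp (-(ktilde : ℂ))) * Complex.exp (ktilde : ℂ) := by rw [h]
      _ = b * (Complex.exp (-(ktilde : ℂ)) * Complex.exp (ktilde : ℂ)) := by ring
      _ = b := by rw [hee]; ring
  -- boundary conditions in terms of a, b
  have hR1 : ((ktilde - δ : ℝ) : ℂ) * a = ((ktilde + δ : ℝ) : ℂ) * b := by
    simp only [ha, hb, hp, hq]
    rw [← hbcl]
    push_cast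
    ring
  have hR2 : ((ktilde + δ : ℝ) : ℂ) * a * (X : ℂ) ^ 2
      = ((ktilde - δ : ℝ) : ℂ) * b := by
    have h1 : ((ktilde + δ : ℝ) : ℂ) * p 1 = ((ktilde - δ : ℝ) : ℂ) * q 1 := by
      simp only [hp, hq]
      rw [hbcr]
      push_cast
      ring
    calc ((ktilde + δ : ℝ) : ℂ) * a * (X : ℂ) ^ 2
        = ((ktilde + δ : ℝ) : ℂ) * (a * (X : ℂ)) * (X : ℂ) := by ring
      _ = ((ktilde + δ : ℝ) : ℂ) * p 1 * (X : ℂ) := by rw [hp1]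
      _ = ((ktilde - δ : ℝ) : ℂ) * (q 1 * (X : ℂ)) := by rw [h1]; ring
      _ = ((ktilde - δ : ℝ) : ℂ) * b := by rw [hq1]
  -- nontriviality: a ≠ 0 or b ≠ 0
  have hab : a ≠ 0 ∨ b ≠ 0 := by
    by_contra hcon
    push_neg at hcon
    obtain ⟨ha0, hb0⟩ := hcon
    obtain ⟨t₀, ht₀, hφt₀⟩ := hne
    have hp0 : p t₀ = 0 := by
      have h := hpsol t₀ ht₀
      rw [ha0, zero_mul, mul_eq_zero] at h
      rcases h with h | h
      · exact h
      · exact absurd h (by exact_mod_cast (Real.exp_pos _).ne')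
    have hq0 : q t₀ = 0 := by
      have h := hqsol t₀ ht₀
      rw [hb0, zero_mul, mul_eq_zero] at h
      rcases h with h | h
      · exact h
      · exact absurd h (by exact_mod_cast (Real.exp_pos _).ne')
    have hu0 : u t₀ = 0 := by
      have hsum : ((2 * ktilde : ℝ) : ℂ) * u t₀ = 0 := by
        have h : p t₀ + q t₀ = 0 := by rw [hp0, hq0]; ring
        simp only [hp, hq] at h
        push_cast
        linear_combination h
      have h2k : ((2 * ktilde : ℝ) : ℂ) ≠ 0 := by
        exact_mod_cast (by positivity : (0 : ℝ) < 2 * ktilde).ne'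
      exact (mul_eq_zero.mp hsum).resolve_left h2k
    have hv0 : v t₀ = 0 := by
      have hdiff : ((2 * δ : ℝ) : ℂ) * v t₀ = 0 := by
        have h : p t₀ - q t₀ = 0 := by rw [hp0, hq0]; ring
        simp only [hp, hq] at h
        push_cast
        linear_combination h
      have h2δ : ((2 * δ : ℝ) : ℂ) ≠ 0 := by
        exact_mod_cast mul_ne_zero (two_ne_zero (α := ℝ)) hδne
      exact (mul_eq_zero.mp hdiff).resolve_left h2δ
    apply hφt₀
    funext i
    fin_cases i
    · exact hu0
    · exact hv0
  -- deduce the determinant condition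
  have hdet : ((ktilde + δ) ^ 2 * X ^ 2 : ℝ) = ((ktilde - δ) ^ 2 : ℝ) := by
    have key : (((ktilde + δ) ^ 2 * X ^ 2 - (ktilde - δ) ^ 2 : ℝ) : ℂ) = 0 := by
      rcases hab with h | h
      · have hmul : (((ktilde + δ) ^ 2 * X ^ 2 - (ktilde - δ) ^ 2 : ℝ) : ℂ) * a = 0 := by
          push_cast
          linear_combination (norm := (push_cast; ring1))
            ((ktilde + δ : ℝ) : ℂ) * hR2 - ((ktilde - δ : ℝ) : ℂ) * hR1
        exact (mul_eq_zero.mp hmul).resolve_right h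
      · have hmul : (((ktilde + δ) ^ 2 * X ^ 2 - (ktilde - δ) ^ 2 : ℝ) : ℂ) * b = 0 := by
          push_cast
          linear_combination (norm := (push_cast; ring1))
            ((ktilde - δ : ℝ) : ℂ) * hR2
              - ((ktilde + δ : ℝ) : ℂ) * (X : ℂ) ^ 2 * hR1
        exact (mul_eq_zero.mp hmul).resolve_right h
    have := key
    push_cast at this
    exact_mod_cast sub_eq_zero.mp (by exact_mod_cast key)
  -- derive the dispersion relation (μ + k̃) X² = μ − k̃
  rw [hδ] at hdet
  have hXeq : (μ + ktilde) * X ^ 2 = μ - ktilde := by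
    have h2 : (2 * (μ + lam)) * ((μ + ktilde) * X ^ 2 - (μ - ktilde)) = 0 := by
      linear_combination hdet + (1 - X ^ 2) * hk2
    have h2ne : (2 * (μ + lam)) ≠ 0 := by
      rw [hδ] at hδne
      exact mul_ne_zero two_ne_zero hδne
    have := (mul_eq_zero.mp h2).resolve_left h2ne
    linarith [sub_eq_zero.mp this]
  -- conclude
  have hXne : X ≠ 0 := hXpos.ne'
  have htanh : Real.tanh (2 * ktilde) = (X - X⁻¹) / (X + X⁻¹) := by
    rw [Real.tanh_eq_sinh_div_cosh, Real.sinh_eq, Real.cosh_eq, Real.exp_neg, ← hX]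
    field_simp
  have hXinv : X * X⁻¹ = 1 := mul_inv_cancel₀ hXne
  have hXgt : 1 < X := by
    rw [hX]
    have := Real.add_one_lt_exp (x := 2 * ktilde) (by positivity)
    linarith
  have hX21 : 0 < X ^ 2 - 1 := by nlinarith [hXgt]
  have heq2 : μ * (X ^ 2 - 1) = -(ktilde * (X ^ 2 + 1)) := by linear_combination hXeq
  constructor
  · rw [htanh]
    have hden : (0:ℝ) < X + X⁻¹ := by positivity
    rw [← mul_div_assoc, div_eq_iff hden.ne']
    have hXi : X⁻¹ = 1 / X := by rw [one_div]
    rw [hXi]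
    field_simp
    linear_combination heq2
  · -- μ < -1/2
    have hsc := sinh_lt_mul_cosh (x := 2 * ktilde) (by positivity)
    rw [Real.sinh_eq, Real.cosh_eq, Real.exp_neg, ← hX] at hsc
    -- hsc : (X - X⁻¹)/2 < 2k̃ * ((X + X⁻¹)/2)
    have hineq : X ^ 2 - 1 < 2 * ktilde * (X ^ 2 + 1) := by
      nlinarith [hsc, hXinv, hXpos]
    nlinarith [heq2, hineq, hX21]
end

section
/- The function h(k) = −k·cos(2k)/sin(2k) is strictly increasing and continuous on the interval (0, π/2), tends to −1/2 as k → 0⁺ and to +∞ as k → (π/2)⁻, and is a bijection from (0, π/2) onto (−1/2, +∞). In particular, for every μ > −1/2 there exists a unique k ∈ (0, π/2) such that μ·sin(2k) + k·cos(2k) = 0. -/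
open Real Filter Set Topology

private lemma disp_sin_pos {k : ℝ} (hk : k ∈ Ioo 0 (π / 2)) : 0 < Real.sin (2 * k) :=
  Real.sin_pos_of_pos_of_lt_pi (by linarith [hk.1]) (by linarith [hk.2])

private lemma disp_hasDerivAt {k : ℝ} (hs : Real.sin (2 * k) ≠ 0) :
    HasDerivAt (fun k : ℝ => -k * Real.cos (2 * k) / Real.sin (2 * k))
      ((2 * k - Real.sin (2 * k) * Real.cos (2 * k)) / (Real.sin (2 * k)) ^ 2) k := by
  have h2k : HasDerivAt (fun x : ℝ => 2 * x) 2 k := by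
    simpa using (hasDerivAt_id k).const_mul 2
  have hcos : HasDerivAt (fun x : ℝ => Real.cos (2 * x)) (-Real.sin (2 * k) * 2) k :=
    (Real.hasDerivAt_cos (2 * k)).comp k h2k
  have hsin : HasDerivAt (fun x : ℝ => Real.sin (2 * x)) (Real.cos (2 * k) * 2) k :=
    (Real.hasDerivAt_sin (2 * k)).comp k h2k
  have hnum : HasDerivAt (fun x : ℝ => -x * Real.cos (2 * x))
      ((-1) * Real.cos (2 * k) + (-k) * (-Real.sin (2 * k) * 2)) k := by
    exact ((hasDerivAt_id' k).neg.mul hcos).congr_deriv (by simp [Pi.neg_apply])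
  have h := hnum.div hsin hs
  refine h.congr_deriv ?_
  have h1 : Real.sin (2 * k) ^ 2 + Real.cos (2 * k) ^ 2 = 1 := Real.sin_sq_add_cos_sq _
  rw [div_eq_div_iff (by positivity) (by positivity)]
  linear_combination (2*k*Real.sin (2*k)^2) * h1

private lemma disp_cont : ContinuousOn (fun k : ℝ => -k * Real.cos (2 * k) / Real.sin (2 * k))
    (Ioo 0 (π / 2)) := by
  apply ContinuousOn.div
  · exact ((continuous_neg.mul (Real.continuous_cos.comp (continuous_const.mul continuous_id)))).continuousOn
  · exact (Real.continuous_sin.comp (continuous_const.mul continuous_id)).continuousOn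
  · exact fun k hk => (disp_sin_pos hk).ne'

private lemma disp_mono : StrictMonoOn (fun k : ℝ => -k * Real.cos (2 * k) / Real.sin (2 * k))
    (Ioo 0 (π / 2)) := by
  apply strictMonoOn_of_hasDerivWithinAt_pos (convex_Ioo _ _) disp_cont
    (f' := fun k => (2 * k - Real.sin (2 * k) * Real.cos (2 * k)) / (Real.sin (2 * k)) ^ 2)
  · intro k hk
    rw [interior_Ioo] at hk
    exact (disp_hasDerivAt (disp_sin_pos hk).ne').hasDerivWithinAt
  · intro k hk
    rw [interior_Ioo] at hk
    have hs := disp_sin_pos hk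
    have h1 : Real.sin (2 * k) < 2 * k := Real.sin_lt (by linarith [hk.1])
    have h2 : Real.cos (2 * k) ≤ 1 := Real.cos_le_one _
    apply div_pos _ (by positivity)
    nlinarith

private lemma disp_lim0 : Tendsto (fun k : ℝ => -k * Real.cos (2 * k) / Real.sin (2 * k))
    (𝓝[>] 0) (𝓝 (-1 / 2)) := by
  have hslope : Tendsto (fun x : ℝ => Real.sin x / x) (𝓝[≠] (0:ℝ)) (𝓝 1) := by
    have := hasDerivAt_iff_tendsto_slope.mp (Real.hasDerivAt_sin 0)
    rw [Real.cos_zero] at this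
    refine this.congr fun x => ?_
    simp [slope_def_field, Real.sin_zero]
  have h2 : Tendsto (fun k : ℝ => 2 * k) (𝓝[>] (0:ℝ)) (𝓝[≠] (0:ℝ)) := by
    rw [tendsto_nhdsWithin_iff]
    constructor
    · have : Tendsto (fun k : ℝ => 2 * k) (𝓝 (0:ℝ)) (𝓝 (2 * 0)) :=
        (continuous_const.mul continuous_id).tendsto 0
      simpa using this.mono_left nhdsWithin_le_nhds
    · filter_upwards [self_mem_nhdsWithin] with k hk
      have : (0:ℝ) < k := hk
      simp only [mem_compl_iff, mem_singleton_iff]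
      positivity
  have hA : Tendsto (fun k : ℝ => Real.sin (2 * k) / (2 * k)) (𝓝[>] (0:ℝ)) (𝓝 1) :=
    hslope.comp h2
  have hB : Tendsto (fun k : ℝ => (Real.sin (2 * k) / (2 * k))⁻¹) (𝓝[>] (0:ℝ)) (𝓝 1) := by
    simpa using hA.inv₀ one_ne_zero
  have hC : Tendsto (fun k : ℝ => -Real.cos (2 * k)) (𝓝[>] (0:ℝ)) (𝓝 (-1)) := by
    have : Tendsto (fun k : ℝ => -Real.cos (2 * k)) (𝓝 (0:ℝ)) (𝓝 (-Real.cos (2 * 0))) :=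
      ((Real.continuous_cos.comp (continuous_const.mul continuous_id)).neg).tendsto 0
    simpa using this.mono_left nhdsWithin_le_nhds
  have hD := (hC.mul hB).mul (tendsto_const_nhds (x := (1:ℝ)/2))
  have heq : ∀ k ∈ Ioi (0:ℝ),
      -Real.cos (2 * k) * (Real.sin (2 * k) / (2 * k))⁻¹ * (1 / 2)
        = -k * Real.cos (2 * k) / Real.sin (2 * k) := by
    intro k hk
    have hk0 : (0:ℝ) < k := hk
    rcases eq_or_ne (Real.sin (2 * k)) 0 with hs | hs
    · simp [hs]
    · field_simp
  have := hD.congr' (by filter_upwards [self_mem_nhdsWithin] with k hk using heq k hk)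
  convert this using 2
  norm_num

private lemma disp_limTop : Tendsto (fun k : ℝ => -k * Real.cos (2 * k) / Real.sin (2 * k))
    (𝓝[<] (π / 2)) atTop := by
  have hpi : (0:ℝ) < π / 2 := by positivity
  have hnum : Tendsto (fun k : ℝ => -k * Real.cos (2 * k)) (𝓝[<] (π / 2)) (𝓝 (π / 2)) := by
    have : Tendsto (fun k : ℝ => -k * Real.cos (2 * k)) (𝓝 (π / 2))
        (𝓝 (-(π / 2) * Real.cos (2 * (π / 2)))) :=
      (continuous_neg.mul (Real.continuous_cos.comp (continuous_const.mul continuous_id))).tendsto _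
    have h : -(π / 2) * Real.cos (2 * (π / 2)) = π / 2 := by
      rw [show (2:ℝ) * (π / 2) = π by ring, Real.cos_pi]; ring
    rw [h] at this
    exact this.mono_left nhdsWithin_le_nhds
  have hden : Tendsto (fun k : ℝ => Real.sin (2 * k)) (𝓝[<] (π / 2)) (𝓝[>] 0) := by
    rw [tendsto_nhdsWithin_iff]
    constructor
    · have : Tendsto (fun k : ℝ => Real.sin (2 * k)) (𝓝 (π / 2)) (𝓝 (Real.sin (2 * (π / 2)))) :=
        (Real.continuous_sin.comp (continuous_const.mul continuous_id)).tendsto _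
      rw [show (2:ℝ) * (π / 2) = π by ring, Real.sin_pi] at this
      exact this.mono_left nhdsWithin_le_nhds
    · have hmem : (π/2:ℝ) ∈ Ioc 0 (π/2) := ⟨by positivity, le_refl _⟩
      filter_upwards [Ioo_mem_nhdsLT_of_mem hmem] with k hk
      exact disp_sin_pos hk
  have := hnum.pos_mul_atTop hpi hden.inv_tendsto_nhdsGT_zero
  refine this.congr fun k => ?_
  rw [div_eq_mul_inv]
  rfl

private lemma disp_lb {k : ℝ} (hk : k ∈ Ioo 0 (π / 2)) :
    -1 / 2 < -k * Real.cos (2 * k) / Real.sin (2 * k) := by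
  set f : ℝ → ℝ := fun k => -k * Real.cos (2 * k) / Real.sin (2 * k) with hf
  have hk2 : k / 2 ∈ Ioo 0 (π / 2) := ⟨by linarith [hk.1], by linarith [hk.1, hk.2]⟩
  have hlt : f (k / 2) < f k := disp_mono hk2 hk (by linarith [hk.1])
  have hle : -1 / 2 ≤ f (k / 2) := by
    refine le_of_tendsto disp_lim0 ?_
    have hmem : (0:ℝ) ∈ Ico 0 (k / 2) := ⟨le_refl _, by linarith [hk.1]⟩
    filter_upwards [Ioo_mem_nhdsGT_of_mem hmem] with x hx
    exact (disp_mono ⟨hx.1, by linarith [hx.2, hk2.2]⟩ hk2 hx.2).le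
  linarith

private lemma disp_surj : SurjOn (fun k : ℝ => -k * Real.cos (2 * k) / Real.sin (2 * k))
    (Ioo 0 (π / 2)) (Ioi (-1 / 2)) := by
  set f : ℝ → ℝ := fun k => -k * Real.cos (2 * k) / Real.sin (2 * k) with hf
  intro y hy
  have hy' : -1 / 2 < y := hy
  -- choose b near π/2 with f b > y
  have hb : ∃ b, b ∈ Ioo 0 (π / 2) ∧ y < f b := by
    have h1 : ∀ᶠ k in 𝓝[<] (π / 2), y < f k := disp_limTop.eventually (eventually_gt_atTop y)
    have hmem : (π / 2 : ℝ) ∈ Ioc 0 (π / 2) := ⟨by positivity, le_refl _⟩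
    have h2 : ∀ᶠ k in 𝓝[<] (π / 2), k ∈ Ioo 0 (π / 2) := Ioo_mem_nhdsLT_of_mem hmem
    exact ((h2.and h1).exists).imp fun b hb => ⟨hb.1, hb.2⟩
  obtain ⟨b, hbmem, hby⟩ := hb
  -- choose a near 0 with f a < y, a < b
  have ha : ∃ a, a ∈ Ioo 0 b ∧ f a < y := by
    have h1 : ∀ᶠ k in 𝓝[>] (0:ℝ), f k < y := disp_lim0.eventually (eventually_lt_nhds hy')
    have hmem : (0:ℝ) ∈ Ico 0 b := ⟨le_refl _, hbmem.1⟩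
    have h2 : ∀ᶠ k in 𝓝[>] (0:ℝ), k ∈ Ioo 0 b := Ioo_mem_nhdsGT_of_mem hmem
    exact ((h2.and h1).exists).imp fun a ha => ⟨ha.1, ha.2⟩
  obtain ⟨a, hamem, hay⟩ := ha
  have hsub : Icc a b ⊆ Ioo 0 (π / 2) := fun x hx =>
    ⟨lt_of_lt_of_le hamem.1 hx.1, lt_of_le_of_lt hx.2 hbmem.2⟩
  have hivt := intermediate_value_Icc (le_of_lt hamem.2) (disp_cont.mono hsub)
  have hyin : y ∈ Icc (f a) (f b) := ⟨hay.le, hby.le⟩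
  obtain ⟨c, hc, hcy⟩ := hivt hyin
  exact ⟨c, hsub hc, hcy⟩

/-- Properties of the function `h(k) = −k·cos(2k)/sin(2k)` on `(0, π/2)`:
strictly increasing, continuous, with limits `−1/2` at `0⁺` and `+∞` at `(π/2)⁻`,
a bijection onto `(−1/2, +∞)`; uniqueness of the solution of the dispersion
equation for every `μ > −1/2`. -/
theorem dispersion_function_properties :
    StrictMonoOn (fun k : ℝ => -k * Real.cos (2 * k) / Real.sin (2 * k))
      (Ioo 0 (π / 2)) ∧
    ContinuousOn (fun k : ℝ => -k * Real.cos (2 * k) / Real.sin (2 * k))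
      (Ioo 0 (π / 2)) ∧
    Tendsto (fun k : ℝ => -k * Real.cos (2 * k) / Real.sin (2 * k))
      (𝓝[>] 0) (𝓝 (-1 / 2)) ∧
    Tendsto (fun k : ℝ => -k * Real.cos (2 * k) / Real.sin (2 * k))
      (𝓝[<] (π / 2)) atTop ∧
    Set.BijOn (fun k : ℝ => -k * Real.cos (2 * k) / Real.sin (2 * k))
      (Ioo 0 (π / 2)) (Ioi (-1 / 2)) ∧
    ∀ μ : ℝ, -1 / 2 < μ →
      ∃! k : ℝ, k ∈ Ioo 0 (π / 2) ∧
        μ * Real.sin (2 * k) + k * Real.cos (2 * k) = 0 := by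
  have hbij : Set.BijOn (fun k : ℝ => -k * Real.cos (2 * k) / Real.sin (2 * k))
      (Ioo 0 (π / 2)) (Ioi (-1 / 2)) :=
    ⟨fun k hk => disp_lb hk, disp_mono.injOn, disp_surj⟩
  refine ⟨disp_mono, disp_cont, disp_lim0, disp_limTop, hbij, ?_⟩
  intro μ hμ
  -- equivalence between the equation and f k = μ
  have hequiv : ∀ k ∈ Ioo 0 (π / 2),
      (μ * Real.sin (2 * k) + k * Real.cos (2 * k) = 0 ↔
        -k * Real.cos (2 * k) / Real.sin (2 * k) = μ) := by
    intro k hk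
    have hs := disp_sin_pos hk
    rw [div_eq_iff hs.ne']
    constructor <;> intro h <;> nlinarith
  obtain ⟨k, hkmem, hkval⟩ := disp_surj (mem_Ioi.mpr hμ)
  refine ⟨k, ⟨hkmem, (hequiv k hkmem).mpr hkval⟩, ?_⟩
  rintro k' ⟨hk'mem, hk'eq⟩
  exact hbij.injOn hk'mem hkmem (((hequiv k' hk'mem).mp hk'eq).trans hkval.symm)
end

section
/- The function g(k̃) = −k̃·cosh(2k̃)/sinh(2k̃) is strictly decreasing and continuous on (0, +∞), tends to −1/2 as k̃ → 0⁺ and to −∞ as k̃ → +∞, and is a bijection from (0, +∞) onto (−∞, −1/2). In particular, for every μ < −1/2 there exists a unique k̃ > 0 such that μ·tanh(2k̃) = −k̃, and for this k̃ one has μ² − k̃² = k̃²/sinh(2k̃)² > 0. -/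
open Real Filter Set Topology



private lemma gHasDeriv (k : ℝ) (hk : 0 < k) :
    HasDerivAt (fun k : ℝ => -k * Real.cosh (2 * k) / Real.sinh (2 * k))
      ((2 * k - Real.sinh (2 * k) * Real.cosh (2 * k)) / Real.sinh (2 * k) ^ 2) k := by
  have hs : 0 < Real.sinh (2 * k) := Real.sinh_pos_iff.2 (by linarith)
  have h2 : HasDerivAt (fun k : ℝ => 2 * k) 2 k := by
    simpa using (hasDerivAt_id k).const_mul 2
  have hsinh : HasDerivAt (fun k : ℝ => Real.sinh (2 * k)) (Real.cosh (2 * k) * 2) k := h2.sinh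
  have hcosh : HasDerivAt (fun k : ℝ => Real.cosh (2 * k)) (Real.sinh (2 * k) * 2) k := h2.cosh
  have hnum : HasDerivAt (fun k : ℝ => -k * Real.cosh (2 * k))
      ((-1) * Real.cosh (2 * k) + (-k) * (Real.sinh (2 * k) * 2)) k :=
    ((hasDerivAt_id k).neg).mul hcosh
  have hdiv : HasDerivAt (fun k : ℝ => -k * Real.cosh (2 * k) / Real.sinh (2 * k)) _ k :=
    hnum.div hsinh hs.ne'
  convert hdiv using 1
  have hcs := Real.cosh_sq_sub_sinh_sq (2 * k)
  congr 1
  linear_combination (-2 * k) * hcs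

private lemma gCont : ContinuousOn (fun k : ℝ => -k * Real.cosh (2 * k) / Real.sinh (2 * k))
    (Ioi 0) := by
  apply ContinuousOn.div
  · fun_prop
  · fun_prop
  · intro x hx
    exact (Real.sinh_pos_iff.2 (by simp at hx; linarith)).ne'

private lemma gAnti : StrictAntiOn (fun k : ℝ => -k * Real.cosh (2 * k) / Real.sinh (2 * k))
    (Ioi 0) := by
  apply strictAntiOn_of_deriv_neg (convex_Ioi 0) gCont
  intro x hx
  rw [interior_Ioi, mem_Ioi] at hx
  rw [(gHasDeriv x hx).deriv]
  have hs : 0 < Real.sinh (2 * x) := Real.sinh_pos_iff.2 (by linarith)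
  have h4 : 4 * x < Real.sinh (4 * x) := Real.self_lt_sinh_iff.2 (by linarith)
  have h42 : Real.sinh (4 * x) = 2 * Real.sinh (2 * x) * Real.cosh (2 * x) := by
    rw [show (4 : ℝ) * x = 2 * (2 * x) by ring, Real.sinh_two_mul]
  exact div_neg_of_neg_of_pos (by nlinarith) (pow_pos hs 2)

private lemma gLim0 : Tendsto (fun k : ℝ => -k * Real.cosh (2 * k) / Real.sinh (2 * k))
    (𝓝[>] 0) (𝓝 (-1 / 2)) := by
  have hslope : Tendsto (fun x : ℝ => Real.sinh x / x) (𝓝[≠] (0:ℝ)) (𝓝 1) := by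
    have h := hasDerivAt_iff_tendsto_slope.1 (Real.hasDerivAt_sinh 0)
    simpa [slope_fun_def, Real.sinh_zero, Real.cosh_zero, div_eq_inv_mul] using h
  have h2k : Tendsto (fun k : ℝ => 2 * k) (𝓝[>] (0:ℝ)) (𝓝[≠] (0:ℝ)) := by
    rw [tendsto_nhdsWithin_iff]
    constructor
    · have : Tendsto (fun k : ℝ => 2 * k) (𝓝 (0:ℝ)) (𝓝 (2 * 0)) :=
        (continuous_const.mul continuous_id).tendsto 0
      simpa using this.mono_left nhdsWithin_le_nhds
    · filter_upwards [self_mem_nhdsWithin] with k hk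
      simp only [mem_compl_iff, mem_singleton_iff]
      have : (0:ℝ) < k := hk
      positivity
  have hmain : Tendsto (fun k : ℝ => Real.sinh (2 * k) / (2 * k)) (𝓝[>] (0:ℝ)) (𝓝 1) :=
    hslope.comp h2k
  have hinv : Tendsto (fun k : ℝ => 2 * k / Real.sinh (2 * k)) (𝓝[>] (0:ℝ)) (𝓝 1) := by
    have := hmain.inv₀ one_ne_zero
    simpa using this
  have hcosh : Tendsto (fun k : ℝ => Real.cosh (2 * k)) (𝓝[>] (0:ℝ)) (𝓝 1) := by
    have : Tendsto (fun k : ℝ => Real.cosh (2 * k)) (𝓝 (0:ℝ)) (𝓝 (Real.cosh (2 * 0))) :=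
      (Real.continuous_cosh.comp (continuous_const.mul continuous_id)).tendsto 0
    simpa using this.mono_left nhdsWithin_le_nhds
  have hfinal := ((hcosh.mul hinv).neg).div_const 2
  have heq : (fun k : ℝ => -(Real.cosh (2 * k) * (2 * k / Real.sinh (2 * k))) / 2)
      = fun k : ℝ => -k * Real.cosh (2 * k) / Real.sinh (2 * k) := by
    funext k; ring
  rw [heq] at hfinal
  convert hfinal using 2
  norm_num

private lemma gBot : Tendsto (fun k : ℝ => -k * Real.cosh (2 * k) / Real.sinh (2 * k))
    atTop atBot := by
  apply tendsto_atBot_mono' atTop (f₁ := fun k : ℝ => -k) _ tendsto_neg_atTop_atBot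
  filter_upwards [eventually_gt_atTop (0:ℝ)] with k hk
  have hs : 0 < Real.sinh (2 * k) := Real.sinh_pos_iff.2 (by linarith)
  have hc : Real.sinh (2 * k) < Real.cosh (2 * k) := Real.sinh_lt_cosh _
  rw [div_le_iff₀ hs]
  nlinarith

private lemma gMapsTo : ∀ k ∈ Ioi (0:ℝ),
    -k * Real.cosh (2 * k) / Real.sinh (2 * k) < -1 / 2 := by
  intro k hk
  rw [mem_Ioi] at hk
  set f := fun k : ℝ => -k * Real.cosh (2 * k) / Real.sinh (2 * k) with hf
  have h1 : f (k / 2) ≤ -1 / 2 := by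
    apply ge_of_tendsto gLim0
    filter_upwards [Ioo_mem_nhdsGT_of_mem (Set.left_mem_Ico.2 (by positivity : (0:ℝ) < k / 2))]
      with t ht
    exact (gAnti (mem_Ioi.2 ht.1) (mem_Ioi.2 (by positivity)) ht.2).le
  have h2 : f k < f (k / 2) :=
    gAnti (mem_Ioi.2 (by positivity)) (mem_Ioi.2 hk) (by linarith)
  linarith

private lemma gSurj : ∀ μ ∈ Iio (-1/2 : ℝ),
    ∃ k ∈ Ioi (0:ℝ), -k * Real.cosh (2 * k) / Real.sinh (2 * k) = μ := by
  intro μ hμ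
  rw [mem_Iio] at hμ
  set f := fun k : ℝ => -k * Real.cosh (2 * k) / Real.sinh (2 * k) with hf
  have hev : ∀ᶠ t in 𝓝[>] (0:ℝ), μ < f t := gLim0.eventually (eventually_gt_nhds hμ)
  obtain ⟨a, ha1, ha0⟩ := (hev.and self_mem_nhdsWithin).exists
  replace ha0 : 0 < a := ha0
  obtain ⟨b, hb1, hab⟩ := ((gBot.eventually (eventually_le_atBot μ)).and
    (eventually_ge_atTop a)).exists
  have hsub : Icc a b ⊆ Ioi 0 := fun x hx => mem_Ioi.2 (lt_of_lt_of_le ha0 hx.1)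
  have := intermediate_value_Icc' hab (gCont.mono hsub)
  obtain ⟨k, hk, hfk⟩ := this ⟨hb1, ha1.le⟩
  exact ⟨k, hsub hk, hfk⟩

private lemma gBij : Set.BijOn (fun k : ℝ => -k * Real.cosh (2 * k) / Real.sinh (2 * k))
    (Ioi 0) (Iio (-1 / 2)) := by
  refine ⟨fun k hk => mem_Iio.2 (gMapsTo k hk), gAnti.injOn, ?_⟩
  intro μ hμ
  obtain ⟨k, hk, hfk⟩ := gSurj μ (by simpa using hμ)
  exact ⟨k, hk, hfk⟩

private lemma gIff (μ k : ℝ) (hk : 0 < k) :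
    μ * Real.tanh (2 * k) = -k ↔ -k * Real.cosh (2 * k) / Real.sinh (2 * k) = μ := by
  have hs : 0 < Real.sinh (2 * k) := Real.sinh_pos_iff.2 (by linarith)
  have hc : 0 < Real.cosh (2 * k) := Real.cosh_pos _
  rw [Real.tanh_eq_sinh_div_cosh, ← mul_div_assoc, div_eq_iff hc.ne', div_eq_iff hs.ne']
  constructor <;> intro h <;> linarith


/-- Properties of the function `g(k̃) = −k̃·cosh(2k̃)/sinh(2k̃)` on `(0, +∞)`:
strictly decreasing, continuous, with limits `−1/2` at `0⁺` and `−∞` at `+∞`,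
a bijection onto `(−∞, −1/2)`; for every `μ < −1/2` there is a unique `k̃ > 0`
with `μ·tanh(2k̃) = −k̃`, and for it `μ² − k̃² = k̃²/sinh²(2k̃) > 0`. -/
theorem dispersion_function_hyperbolic_properties :
    StrictAntiOn (fun k : ℝ => -k * Real.cosh (2 * k) / Real.sinh (2 * k))
      (Ioi 0) ∧
    ContinuousOn (fun k : ℝ => -k * Real.cosh (2 * k) / Real.sinh (2 * k))
      (Ioi 0) ∧
    Tendsto (fun k : ℝ => -k * Real.cosh (2 * k) / Real.sinh (2 * k))
      (𝓝[>] 0) (𝓝 (-1 / 2)) ∧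
    Tendsto (fun k : ℝ => -k * Real.cosh (2 * k) / Real.sinh (2 * k))
      atTop atBot ∧
    Set.BijOn (fun k : ℝ => -k * Real.cosh (2 * k) / Real.sinh (2 * k))
      (Ioi 0) (Iio (-1 / 2)) ∧
    ∀ μ : ℝ, μ < -1 / 2 →
      (∃! k : ℝ, 0 < k ∧ μ * Real.tanh (2 * k) = -k) ∧
      ∀ k : ℝ, 0 < k → μ * Real.tanh (2 * k) = -k →
        μ ^ 2 - k ^ 2 = k ^ 2 / Real.sinh (2 * k) ^ 2 ∧ 0 < μ ^ 2 - k ^ 2 := by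
  refine ⟨gAnti, gCont, gLim0, gBot, gBij, fun μ hμ => ⟨?_, ?_⟩⟩
  · obtain ⟨k, hk, hfk⟩ := gSurj μ (mem_Iio.2 (by linarith))
    rw [mem_Ioi] at hk
    refine ⟨k, ⟨hk, (gIff μ k hk).2 hfk⟩, ?_⟩
    rintro y ⟨hy0, hy⟩
    exact gAnti.injOn (mem_Ioi.2 hy0) (mem_Ioi.2 hk)
      (((gIff μ y hy0).1 hy).trans hfk.symm)
  · intro k hk heq
    have hs : 0 < Real.sinh (2 * k) := Real.sinh_pos_iff.2 (by linarith)
    have hc : 0 < Real.cosh (2 * k) := Real.cosh_pos _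
    have h1 : μ * Real.sinh (2 * k) = -k * Real.cosh (2 * k) := by
      rw [Real.tanh_eq_sinh_div_cosh, ← mul_div_assoc, div_eq_iff hc.ne'] at heq
      linarith
    have h2 := Real.cosh_sq_sub_sinh_sq (2 * k)
    have hmain : μ ^ 2 - k ^ 2 = k ^ 2 / Real.sinh (2 * k) ^ 2 := by
      rw [eq_div_iff (pow_ne_zero 2 hs.ne')]
      linear_combination (μ * Real.sinh (2 * k) - k * Real.cosh (2 * k)) * h1 + k ^ 2 * h2
    exact ⟨hmain, hmain ▸ div_pos (pow_pos hk 2) (pow_pos hs 2)⟩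
end

section
/- Let k̃ : (−∞, −1/2) → (0, +∞) be any function such that μ·tanh(2·k̃(μ)) = −k̃(μ) for all μ < −1/2. Then k̃(μ) → +∞ as μ → −∞, and μ² − k̃(μ)² → 0 as μ → −∞. -/
open Filter Topology

lemma tanh_formula (x : ℝ) : Real.tanh x = 1 - 2 / (Real.exp (2 * x) + 1) := by
  rw [Real.tanh_eq_sinh_div_cosh, Real.sinh_eq, Real.cosh_eq]
  have h1 : Real.exp x ≠ 0 := (Real.exp_pos x).ne'
  have hx : Real.exp (2 * x) = Real.exp x * Real.exp x := by
    rw [← Real.exp_add, two_mul]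
  have h2 : Real.exp (2 * x) + 1 ≠ 0 := by positivity
  have h3 : (0:ℝ) < Real.exp x + Real.exp (-x) := by positivity
  rw [Real.exp_neg] at h3 ⊢
  field_simp
  nlinarith [Real.exp_pos x]

lemma tanh_mono {x y : ℝ} (h : x ≤ y) : Real.tanh x ≤ Real.tanh y := by
  rw [tanh_formula, tanh_formula]
  have h1 : (0:ℝ) < Real.exp (2 * x) + 1 := by positivity
  have h2 : Real.exp (2 * x) + 1 ≤ Real.exp (2 * y) + 1 := by
    have := Real.exp_le_exp.2 (by linarith : 2 * x ≤ 2 * y); linarith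
  have := div_le_div_of_nonneg_left (by norm_num : (0:ℝ) ≤ 2) h1 h2
  linarith

lemma tanh_pos {x : ℝ} (hx : 0 < x) : 0 < Real.tanh x := by
  rw [Real.tanh_eq_sinh_div_cosh]
  exact div_pos (Real.sinh_pos_iff.2 hx) (Real.cosh_pos x)

lemma tanh_lt_one (x : ℝ) : Real.tanh x < 1 := by
  rw [Real.tanh_eq_sinh_div_cosh, div_lt_one (Real.cosh_pos x)]
  exact Real.sinh_lt_cosh x

lemma tanh_lower {x : ℝ} (hx0 : 0 < x) (hx1 : x ≤ 1) : x / Real.cosh 1 ≤ Real.tanh x := by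
  rw [Real.tanh_eq_sinh_div_cosh]
  have h1 : x ≤ Real.sinh x := Real.self_le_sinh_iff.2 hx0.le
  have h2 : Real.cosh x ≤ Real.cosh 1 := by
    rw [Real.cosh_le_cosh, abs_of_pos hx0]
    simpa using hx1
  exact div_le_div₀ (Real.sinh_pos_iff.2 hx0).le h1 (Real.cosh_pos x) h2

lemma aux_tendsto {c : ℝ} (hc : 0 < c) :
    Tendsto (fun μ : ℝ => 4 * μ ^ 2 * Real.exp (4 * c * μ)) atBot (𝓝 0) := by
  have hbase := Real.tendsto_pow_mul_exp_neg_atTop_nhds_zero 2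
  have h4c : (0:ℝ) < 4 * c := by positivity
  have hmul : Tendsto (fun t : ℝ => (4 * c) * t) atTop atTop :=
    tendsto_id.const_mul_atTop h4c
  have hcomp : Tendsto (fun t : ℝ => ((4 * c) * t) ^ 2 * Real.exp (-((4 * c) * t)))
      atTop (𝓝 0) := hbase.comp hmul
  have h2 : Tendsto (fun t : ℝ => 4 * t ^ 2 * Real.exp (-((4 * c) * t))) atTop (𝓝 0) := by
    have h := hcomp.const_mul (4 / ((4 * c) ^ 2))
    rw [mul_zero] at h
    refine h.congr fun t => ?_
    have h4c2 : ((4:ℝ) * c) ^ 2 ≠ 0 := by positivity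
    field_simp
  have h3 := h2.comp tendsto_neg_atBot_atTop
  refine h3.congr fun μ => ?_
  show 4 * (-μ) ^ 2 * Real.exp (-((4 * c) * (-μ))) = 4 * μ ^ 2 * Real.exp (4 * c * μ)
  have : -((4 * c) * (-μ)) = 4 * c * μ := by ring
  rw [this, neg_sq]

/-- If `k̃(μ) > 0` solves `μ·tanh(2k̃(μ)) = −k̃(μ)` for all `μ < −1/2`, then
`k̃(μ) → +∞` and `μ² − k̃(μ)² → 0` as `μ → −∞`. -/
theorem ktilde_asymptotics (ktilde : ℝ → ℝ)
    (hpos : ∀ μ : ℝ, μ < -1 / 2 → 0 < ktilde μ)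
    (heq : ∀ μ : ℝ, μ < -1 / 2 → μ * Real.tanh (2 * ktilde μ) = -ktilde μ) :
    Tendsto ktilde atBot atTop ∧
    Tendsto (fun μ : ℝ => μ ^ 2 - ktilde μ ^ 2) atBot (𝓝 0) := by
  set c : ℝ := Real.tanh 1 with hc_def
  have hc : 0 < c := tanh_pos one_pos
  have hcosh1 : (1:ℝ) ≤ Real.cosh 1 := Real.one_le_cosh 1
  -- main lower bound on ktilde
  have hk : ∀ μ : ℝ, μ < -Real.cosh 1 → -μ * c ≤ ktilde μ := by
    intro μ hμ
    have hμ2 : μ < -1/2 := by linarith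
    have hk0 := hpos μ hμ2
    have hkeq : ktilde μ = -μ * Real.tanh (2 * ktilde μ) := by
      have := heq μ hμ2; linarith [this]
    set k := ktilde μ
    have hμpos : 0 < -μ := by linarith
    -- step 1 : 1 ≤ 2 * k
    have h2k : 1 ≤ 2 * k := by
      by_contra h
      push_neg at h
      have ht := tanh_lower (by linarith : 0 < 2 * k) h.le
      have hmono : -μ * ((2 * k) / Real.cosh 1) ≤ -μ * Real.tanh (2 * k) :=
        mul_le_mul_of_nonneg_left ht hμpos.le
      have hlt : Real.cosh 1 * ((2 * k) / Real.cosh 1) < -μ * ((2 * k) / Real.cosh 1) := by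
        apply mul_lt_mul_of_pos_right (by linarith)
        positivity
      have hch : Real.cosh 1 ≠ 0 := by positivity
      rw [mul_div_assoc', mul_comm, mul_div_assoc, div_self hch, mul_one] at hlt
      nlinarith [hkeq]
    -- step 2
    have ht : c ≤ Real.tanh (2 * k) := tanh_mono h2k
    calc -μ * c ≤ -μ * Real.tanh (2 * k) := mul_le_mul_of_nonneg_left ht hμpos.le
      _ = k := hkeq.symm
  have hev : ∀ᶠ μ : ℝ in atBot, μ < -Real.cosh 1 := eventually_lt_atBot _
  constructor
  · apply tendsto_atTop_mono' atBot (hev.mono fun μ h => hk μ h)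
    exact (tendsto_neg_atBot_atTop).atTop_mul_const hc
  · -- squeeze
    have key : ∀ μ : ℝ, μ < -Real.cosh 1 →
        0 ≤ μ ^ 2 - ktilde μ ^ 2 ∧
        μ ^ 2 - ktilde μ ^ 2 ≤ 4 * μ ^ 2 * Real.exp (4 * c * μ) := by
      intro μ hμ
      have hμ2 : μ < -1/2 := by linarith
      have hk0 := hpos μ hμ2
      have hkb := hk μ hμ
      have hkeq : ktilde μ = -μ * Real.tanh (2 * ktilde μ) := by
        have := heq μ hμ2; linarith [this]
      set k := ktilde μ
      set t := Real.tanh (2 * k) with ht_def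
      have htpos : 0 < t := tanh_pos (by linarith)
      have htlt : t < 1 := tanh_lt_one _
      have hcoshpos := Real.cosh_pos (2 * k)
      have h1t : 1 - t ^ 2 = 1 / Real.cosh (2 * k) ^ 2 := by
        have hs := Real.cosh_sq_sub_sinh_sq (2 * k)
        rw [ht_def, Real.tanh_eq_sinh_div_cosh]
        field_simp
        linarith [hs]
      have heq2 : μ ^ 2 - k ^ 2 = μ ^ 2 * (1 - t ^ 2) := by
        rw [hkeq]; ring
      constructor
      · have hnn : (0:ℝ) ≤ 1 - t ^ 2 := by nlinarith
        nlinarith [mul_nonneg (sq_nonneg μ) hnn]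
      · -- cosh(2k) ≥ exp(2k)/2 so 1/cosh² ≤ 4 exp(-4k)
        have hch : Real.exp (2 * k) / 2 ≤ Real.cosh (2 * k) := by
          rw [Real.cosh_eq]
          have := (Real.exp_pos (-(2 * k))).le
          linarith
        have hsq : (Real.exp (2 * k) / 2) ^ 2 ≤ Real.cosh (2 * k) ^ 2 :=
          pow_le_pow_left₀ (by positivity) hch 2
        have hE : Real.exp (2 * k) ^ 2 = Real.exp (4 * k) := by
          rw [sq, ← Real.exp_add]; ring_nf
        have h14 : 1 / Real.cosh (2 * k) ^ 2 ≤ 4 * Real.exp (-(4 * k)) := by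
          rw [div_le_iff₀ (by positivity), Real.exp_neg]
          have hEpos : (0:ℝ) < Real.exp (4 * k) := Real.exp_pos _
          rw [div_pow, hE] at hsq
          norm_num at hsq
          calc (1:ℝ) = 4 * (Real.exp (4 * k))⁻¹ * (Real.exp (4 * k) / 4) := by
                field_simp
            _ ≤ 4 * (Real.exp (4 * k))⁻¹ * Real.cosh (2 * k) ^ 2 := by
                apply mul_le_mul_of_nonneg_left hsq (by positivity)
        have hexp_le : Real.exp (-(4 * k)) ≤ Real.exp (4 * c * μ) := by
          apply Real.exp_le_exp.2
          nlinarith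
        calc μ ^ 2 - k ^ 2 = μ ^ 2 * (1 - t ^ 2) := heq2
          _ = μ ^ 2 * (1 / Real.cosh (2 * k) ^ 2) := by rw [h1t]
          _ ≤ μ ^ 2 * (4 * Real.exp (-(4 * k))) :=
              mul_le_mul_of_nonneg_left h14 (sq_nonneg μ)
          _ ≤ μ ^ 2 * (4 * Real.exp (4 * c * μ)) := by
              apply mul_le_mul_of_nonneg_left _ (sq_nonneg μ)
              apply mul_le_mul_of_nonneg_left hexp_le (by norm_num)
          _ = 4 * μ ^ 2 * Real.exp (4 * c * μ) := by ring
    refine tendsto_of_tendsto_of_tendsto_of_le_of_le' tendsto_const_nhds (aux_tendsto hc)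
      (hev.mono fun μ h => (key μ h).1) (hev.mono fun μ h => (key μ h).2)
end

section
/- Let U ⊆ ℝ be an open neighborhood of 0 and let k : U → ℝ be twice differentiable with k(0) = π/4, sin(2·k(μ)) ≠ 0, and μ·sin(2·k(μ)) + k(μ)·cos(2·k(μ)) = 0 for all μ ∈ U. Then k'(0) = 2/π and k''(0) = −32/π³. Moreover, the function ν(μ) = √(μ² + k(μ)²) satisfies ν(0) = π/4, ν'(0) = 2/π, and ν''(0) = 4/π − 32/π³. -/
open Real

/-- Taylor coefficients at `0` of the first branch `k₁(μ)` of the implicit relation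
`μ·sin(2k) + k·cos(2k) = 0` with `k₁(0) = π/4`, and of the first eigenvalue
`ν(μ) = √(μ² + k₁(μ)²)`. -/
theorem first_branch_taylor (U : Set ℝ) (hU : IsOpen U) (h0 : (0 : ℝ) ∈ U)
    (k : ℝ → ℝ)
    (hk1 : ∀ μ ∈ U, DifferentiableAt ℝ k μ)
    (hk2 : ∀ μ ∈ U, DifferentiableAt ℝ (deriv k) μ)
    (hk0 : k 0 = π / 4)
    (hsin : ∀ μ ∈ U, Real.sin (2 * k μ) ≠ 0)
    (heq : ∀ μ ∈ U, μ * Real.sin (2 * k μ) + k μ * Real.cos (2 * k μ) = 0) :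
    deriv k 0 = 2 / π ∧
    deriv (deriv k) 0 = -32 / π ^ 3 ∧
    (fun μ : ℝ => Real.sqrt (μ ^ 2 + k μ ^ 2)) 0 = π / 4 ∧
    deriv (fun μ : ℝ => Real.sqrt (μ ^ 2 + k μ ^ 2)) 0 = 2 / π ∧
    deriv (deriv (fun μ : ℝ => Real.sqrt (μ ^ 2 + k μ ^ 2))) 0
      = 4 / π - 32 / π ^ 3 := by
  have hπ : (0:ℝ) < π := Real.pi_pos
  have hπ' : (π:ℝ) ≠ 0 := ne_of_gt hπ
  have hsin0 : Real.sin (2 * k 0) = 1 := by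
    rw [hk0, show 2 * (π/4) = π/2 by ring, Real.sin_pi_div_two]
  have hcos0 : Real.cos (2 * k 0) = 0 := by
    rw [hk0, show 2 * (π/4) = π/2 by ring, Real.cos_pi_div_two]
  -- First derivative identity on U
  have key : ∀ μ ∈ U, Real.sin (2 * k μ) +
      deriv k μ * ((2*μ + 1) * Real.cos (2 * k μ) - 2 * k μ * Real.sin (2 * k μ)) = 0 := by
    intro μ hμ
    have hk := (hk1 μ hμ).hasDerivAt
    have h2k : HasDerivAt (fun x => 2 * k x) (2 * deriv k μ) μ := hk.const_mul 2
    have hs : HasDerivAt (fun x => Real.sin (2 * k x))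
        (Real.cos (2 * k μ) * (2 * deriv k μ)) μ := (Real.hasDerivAt_sin _).comp μ h2k
    have hc : HasDerivAt (fun x => Real.cos (2 * k x))
        (-Real.sin (2 * k μ) * (2 * deriv k μ)) μ := (Real.hasDerivAt_cos _).comp μ h2k
    have h1 : HasDerivAt (fun x => x * Real.sin (2 * k x))
        (1 * Real.sin (2 * k μ) + μ * (Real.cos (2 * k μ) * (2 * deriv k μ))) μ :=
      (hasDerivAt_id μ).mul hs
    have h2 : HasDerivAt (fun x => k x * Real.cos (2 * k x))
        (deriv k μ * Real.cos (2 * k μ) + k μ * (-Real.sin (2 * k μ) * (2 * deriv k μ))) μ :=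
      hk.mul hc
    have hH : HasDerivAt (fun x => x * Real.sin (2 * k x) + k x * Real.cos (2 * k x))
        (Real.sin (2 * k μ) +
          deriv k μ * ((2*μ + 1) * Real.cos (2 * k μ) - 2 * k μ * Real.sin (2 * k μ))) μ := by
      have := h1.add h2
      simp only [Pi.add_def] at this
      exact this.congr_deriv (by ring)
    have hzero : (fun x => x * Real.sin (2 * k x) + k x * Real.cos (2 * k x))
        =ᶠ[nhds μ] (fun _ => (0:ℝ)) := by
      filter_upwards [hU.mem_nhds hμ] with x hx using heq x hx
    have hd0 : deriv (fun x => x * Real.sin (2 * k x) + k x * Real.cos (2 * k x)) μ = 0 := by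
      rw [hzero.deriv_eq]; simp
    rw [← hH.deriv, hd0]
  -- k'(0)
  have ha : deriv k 0 = 2 / π := by
    have h := key 0 h0
    rw [hsin0, hcos0, hk0] at h
    field_simp at h ⊢
    linarith
  refine ⟨ha, ?_⟩
  -- second derivative of k at 0
  have hb : deriv (deriv k) 0 = -32 / π ^ 3 := by
    have hk := (hk1 0 h0).hasDerivAt
    have hkd := (hk2 0 h0).hasDerivAt
    have h2k : HasDerivAt (fun x => 2 * k x) (2 * deriv k 0) 0 := hk.const_mul 2
    have hs : HasDerivAt (fun x => Real.sin (2 * k x))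
        (Real.cos (2 * k 0) * (2 * deriv k 0)) 0 := (Real.hasDerivAt_sin _).comp 0 h2k
    have hc : HasDerivAt (fun x => Real.cos (2 * k x))
        (-Real.sin (2 * k 0) * (2 * deriv k 0)) 0 := (Real.hasDerivAt_cos _).comp 0 h2k
    have hlin : HasDerivAt (fun x : ℝ => 2*x + 1) 2 0 := by
      simpa using ((hasDerivAt_id (0:ℝ)).const_mul 2).add_const 1
    have hA : HasDerivAt (fun x => (2*x + 1) * Real.cos (2 * k x))
        (2 * Real.cos (2 * k 0) + (2*0 + 1) * (-Real.sin (2 * k 0) * (2 * deriv k 0))) 0 :=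
      hlin.mul hc
    have hB : HasDerivAt (fun x => 2 * k x * Real.sin (2 * k x))
        (2 * deriv k 0 * Real.sin (2 * k 0) + 2 * k 0 * (Real.cos (2 * k 0) * (2 * deriv k 0))) 0 :=
      h2k.mul hs
    have hC : HasDerivAt
        (fun x => (2*x + 1) * Real.cos (2 * k x) - 2 * k x * Real.sin (2 * k x))
        ((2 * Real.cos (2 * k 0) + (2*0 + 1) * (-Real.sin (2 * k 0) * (2 * deriv k 0)))
          - (2 * deriv k 0 * Real.sin (2 * k 0) + 2 * k 0 * (Real.cos (2 * k 0) * (2 * deriv k 0)))) 0 :=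
      hA.sub hB
    have hG : HasDerivAt (fun x => Real.sin (2 * k x) +
        deriv k x * ((2*x + 1) * Real.cos (2 * k x) - 2 * k x * Real.sin (2 * k x)))
        (Real.cos (2 * k 0) * (2 * deriv k 0)
          + (deriv (deriv k) 0 * ((2*0 + 1) * Real.cos (2 * k 0) - 2 * k 0 * Real.sin (2 * k 0))
            + deriv k 0 * ((2 * Real.cos (2 * k 0) + (2*0 + 1) * (-Real.sin (2 * k 0) * (2 * deriv k 0)))
              - (2 * deriv k 0 * Real.sin (2 * k 0) + 2 * k 0 * (Real.cos (2 * k 0) * (2 * deriv k 0)))))) 0 :=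
      hs.add (hkd.mul hC)
    have hzero : (fun x => Real.sin (2 * k x) +
        deriv k x * ((2*x + 1) * Real.cos (2 * k x) - 2 * k x * Real.sin (2 * k x)))
        =ᶠ[nhds (0:ℝ)] (fun _ => (0:ℝ)) := by
      filter_upwards [hU.mem_nhds h0] with x hx using key x hx
    have hd0 : deriv (fun x => Real.sin (2 * k x) +
        deriv k x * ((2*x + 1) * Real.cos (2 * k x) - 2 * k x * Real.sin (2 * k x))) 0 = 0 := by
      rw [hzero.deriv_eq]; simp
    have h := hG.deriv
    rw [hd0, hsin0, hcos0, hk0, ha] at h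
    field_simp at h ⊢
    nlinarith [hπ, sq_nonneg π]
  refine ⟨hb, ?_⟩
  -- ν(0)
  have hν0 : Real.sqrt ((0:ℝ) ^ 2 + k 0 ^ 2) = π / 4 := by
    rw [hk0]
    rw [show (0:ℝ)^2 + (π/4)^2 = (π/4)^2 by ring]
    exact Real.sqrt_sq (by positivity)
  refine ⟨hν0, ?_⟩
  -- positivity of μ² + k μ² on U
  have hfpos : ∀ μ ∈ U, (0:ℝ) < μ ^ 2 + k μ ^ 2 := by
    intro μ hμ
    rcases eq_or_ne μ 0 with rfl | hne
    · rw [hk0]; positivity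
    · have : (0:ℝ) < μ ^ 2 := by positivity
      nlinarith [sq_nonneg (k μ)]
  -- derivative of ν on U
  have hνd : ∀ μ ∈ U, HasDerivAt (fun x => Real.sqrt (x ^ 2 + k x ^ 2))
      ((2 * μ + 2 * k μ * deriv k μ) / (2 * Real.sqrt (μ ^ 2 + k μ ^ 2))) μ := by
    intro μ hμ
    have hk := (hk1 μ hμ).hasDerivAt
    have hf : HasDerivAt (fun x => x ^ 2 + k x ^ 2) (2 * μ + 2 * k μ * deriv k μ) μ := by
      have h1 : HasDerivAt (fun x : ℝ => x ^ 2) (2 * μ) μ := by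
        simpa using hasDerivAt_pow 2 μ
      have h2 : HasDerivAt (fun x => k x ^ 2) ((2:ℕ) * k μ ^ 1 * deriv k μ) μ := hk.pow 2
      have := h1.add h2
      simp only [Pi.add_def] at this
      exact this.congr_deriv (by push_cast; ring)
    exact hf.sqrt (ne_of_gt (hfpos μ hμ))
  have hνd0 : deriv (fun x => Real.sqrt (x ^ 2 + k x ^ 2)) 0 = 2 / π := by
    rw [(hνd 0 h0).deriv, hν0, hk0, ha]
    field_simp
    ring
  refine ⟨hνd0, ?_⟩
  -- second derivative of ν at 0
  have heqd : deriv (fun x => Real.sqrt (x ^ 2 + k x ^ 2))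
      =ᶠ[nhds (0:ℝ)] fun μ => (2 * μ + 2 * k μ * deriv k μ) / (2 * Real.sqrt (μ ^ 2 + k μ ^ 2)) := by
    filter_upwards [hU.mem_nhds h0] with x hx using (hνd x hx).deriv
  rw [heqd.deriv_eq]
  -- compute derivative of the explicit formula at 0
  have hk := (hk1 0 h0).hasDerivAt
  have hkd := (hk2 0 h0).hasDerivAt
  have hN : HasDerivAt (fun μ => 2 * μ + 2 * k μ * deriv k μ)
      (2 + (2 * deriv k 0 * deriv k 0 + 2 * k 0 * deriv (deriv k) 0)) 0 := by
    have h1 : HasDerivAt (fun μ : ℝ => 2 * μ) 2 0 := by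
      simpa using (hasDerivAt_id (0:ℝ)).const_mul 2
    have h2 : HasDerivAt (fun μ => 2 * k μ * deriv k μ)
        (2 * deriv k 0 * deriv k 0 + 2 * k 0 * deriv (deriv k) 0) 0 :=
      (hk.const_mul 2).mul hkd
    exact h1.add h2
  have hfpos0 := hfpos 0 h0
  have hf0 : HasDerivAt (fun x => x ^ 2 + k x ^ 2) (2 * 0 + 2 * k 0 * deriv k 0) 0 := by
    have h1 : HasDerivAt (fun x : ℝ => x ^ 2) (2 * 0) 0 := by
      simpa using hasDerivAt_pow 2 (0:ℝ)
    have h2 : HasDerivAt (fun x => k x ^ 2) ((2:ℕ) * k 0 ^ 1 * deriv k 0) 0 := hk.pow 2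
    have := h1.add h2
    simp only [Pi.add_def] at this
    exact this.congr_deriv (by push_cast; ring)
  have hD : HasDerivAt (fun μ => 2 * Real.sqrt (μ ^ 2 + k μ ^ 2))
      (2 * ((2 * 0 + 2 * k 0 * deriv k 0) / (2 * Real.sqrt (0 ^ 2 + k 0 ^ 2)))) 0 :=
    (hf0.sqrt (ne_of_gt hfpos0)).const_mul 2
  have hDne : 2 * Real.sqrt ((0:ℝ) ^ 2 + k 0 ^ 2) ≠ 0 := by
    rw [hν0]; positivity
  have hq := (hN.div hD hDne).deriv
  simp only [Pi.div_def] at hq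
  rw [hq]
  rw [hν0, hk0, ha, hb]
  have hπ3 : (π:ℝ)^3 ≠ 0 := pow_ne_zero 3 hπ'
  field_simp
  ring
end

section
/- Let n ∈ ℕ, let A and S be n×n complex Hermitian matrices with S·S = 1 (identity), S·A = −A·S, and A invertible, and let ξ ∈ ℝ. Then the spectrum of A + ξ·S equals the set { ε·√(ξ² + λ²) : λ a (real) eigenvalue of A, ε ∈ {+1, −1} }. -/
open Matrix

variable {n : ℕ}

lemma mem_spectrum_iff_exists_mulVec {M : Matrix (Fin n) (Fin n) ℂ} {c : ℂ} :
    c ∈ spectrum ℂ M ↔ ∃ v : Fin n → ℂ, v ≠ 0 ∧ M *ᵥ v = c • v := by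
  rw [← AlgEquiv.spectrum_eq (Matrix.toLinAlgEquiv' (R := ℂ) (n := Fin n)) M,
    ← Module.End.hasEigenvalue_iff_mem_spectrum, Module.End.hasEigenvalue_iff,
    Submodule.ne_bot_iff]
  constructor
  · rintro ⟨v, hv, hv0⟩
    rw [Module.End.mem_eigenspace_iff, Matrix.toLinAlgEquiv'_apply] at hv
    exact ⟨v, hv0, hv⟩
  · rintro ⟨v, hv0, hv⟩
    exact ⟨v, Module.End.mem_eigenspace_iff.mpr (by rwa [Matrix.toLinAlgEquiv'_apply]), hv0⟩

lemma herm_spectrum_real {M : Matrix (Fin n) (Fin n) ℂ} (hM : M.IsHermitian) {c : ℂ}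
    (hc : c ∈ spectrum ℂ M) : ∃ r : ℝ, c = (r : ℂ) := by
  rw [hM.spectral_theorem, Unitary.conjStarAlgAut_apply, Unitary.spectrum_star_right_conjugate, spectrum_diagonal] at hc
  obtain ⟨i, hi⟩ := hc
  exact ⟨hM.eigenvalues i, hi.symm⟩

/-- Finite-dimensional supersymmetry: if `A`, `S` are Hermitian, `S² = 1`,
`SA = −AS` and `A` is invertible, then the spectrum of `A + ξ·S` is
`{±√(ξ² + λ²) : λ real eigenvalue of A}`. -/
theorem susy_spectrum (n : ℕ) (A S : Matrix (Fin n) (Fin n) ℂ)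
    (hA : A.IsHermitian) (hS : S.IsHermitian)
    (hS2 : S * S = 1) (hanti : S * A = -(A * S)) (hAinv : IsUnit A)
    (ξ : ℝ) :
    spectrum ℂ (A + (ξ : ℂ) • S)
      = {c : ℂ | ∃ lam : ℝ, (lam : ℂ) ∈ spectrum ℂ A ∧
          (c = (Real.sqrt (ξ ^ 2 + lam ^ 2) : ℝ) ∨
            c = -(Real.sqrt (ξ ^ 2 + lam ^ 2) : ℝ))} := by
  have hMherm : (A + (ξ : ℂ) • S).IsHermitian := by
    apply hA.add
    unfold Matrix.IsHermitian
    rw [conjTranspose_smul, hS]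
    norm_num
  have hMsq : (A + (ξ : ℂ) • S) * (A + (ξ : ℂ) • S) = A * A + ((ξ:ℂ)^2) • 1 := by
    have h1 : A * ((ξ:ℂ) • S) = (ξ:ℂ) • (A * S) := by rw [Matrix.mul_smul]
    have h2 : ((ξ:ℂ) • S) * A = -((ξ:ℂ) • (A * S)) := by
      rw [Matrix.smul_mul, hanti, smul_neg]
    have h3 : ((ξ:ℂ) • S) * ((ξ:ℂ) • S) = ((ξ:ℂ)^2) • 1 := by
      rw [Matrix.smul_mul, Matrix.mul_smul, hS2, smul_smul, sq]
    rw [add_mul, mul_add, mul_add, h1, h2, h3]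
    abel
  ext c
  simp only [Set.mem_setOf_eq]
  constructor
  · intro hc
    obtain ⟨μ, rfl⟩ := herm_spectrum_real hMherm hc
    have h1 : (μ:ℂ)^2 ∈ spectrum ℂ ((A + (ξ : ℂ) • S)^2) :=
      spectrum.pow_image_subset (𝕜 := ℂ) _ 2 ⟨_, hc, rfl⟩
    rw [sq, hMsq] at h1
    have h2 : ((μ:ℂ)^2 - (ξ:ℂ)^2) ∈ spectrum ℂ (A*A) := by
      rw [← spectrum.add_mem_add_iff (a := A*A) (s := ((ξ:ℂ)^2)) (r := (μ:ℂ)^2 - (ξ:ℂ)^2)]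
      have heq : (algebraMap ℂ (Matrix (Fin n) (Fin n) ℂ)) ((ξ:ℂ)^2) + A*A
          = A * A + ((ξ:ℂ)^2) • 1 := by
        rw [Algebra.algebraMap_eq_smul_one, add_comm]
      rw [heq, sub_add_cancel]
      exact h1
    rw [← sq, spectrum.map_pow_of_pos (𝕜 := ℂ) A (by norm_num : 0 < 2)] at h2
    obtain ⟨z, hzA, hzsq⟩ := h2
    obtain ⟨lam, rfl⟩ := herm_spectrum_real hA hzA
    have hreal : μ^2 = ξ^2 + lam^2 := by
      have h : ((lam^2 : ℝ) : ℂ) = ((μ^2 - ξ^2 : ℝ) : ℂ) := by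
        push_cast
        linear_combination hzsq
      have := Complex.ofReal_injective h
      linarith
    refine ⟨lam, hzA, ?_⟩
    have hs : Real.sqrt (ξ^2+lam^2) = |μ| := by rw [← hreal, Real.sqrt_sq_eq_abs]
    rcases abs_choice μ with h|h
    · left; rw [hs, h]
    · right; rw [hs, h]; push_cast; ring
  · rintro ⟨lam, hlam, hc⟩
    obtain ⟨v, hv0, hAv⟩ := mem_spectrum_iff_exists_mulVec.mp hlam
    have hlam0 : (lam:ℂ) ≠ 0 := by
      intro h
      rw [h] at hlam
      exact spectrum.zero_notMem ℂ hAinv hlam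
    obtain ⟨μ, hcμ, hμ2⟩ : ∃ μ : ℝ, c = (μ:ℂ) ∧ μ^2 = ξ^2 + lam^2 := by
      rcases hc with h|h
      · exact ⟨Real.sqrt (ξ^2+lam^2), h, Real.sq_sqrt (by positivity)⟩
      · exact ⟨-Real.sqrt (ξ^2+lam^2), by rw [h]; push_cast; ring,
          by rw [neg_pow]; simp [Real.sq_sqrt (show (0:ℝ) ≤ ξ^2+lam^2 by positivity)]⟩
    subst hcμ
    rw [mem_spectrum_iff_exists_mulVec]
    have hSv : A *ᵥ (S *ᵥ v) = (-(lam:ℂ)) • (S *ᵥ v) := by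
      rw [mulVec_mulVec, show A * S = -(S*A) by rw [hanti, neg_neg], neg_mulVec,
        ← mulVec_mulVec, hAv, mulVec_smul, neg_smul]
    have hSSv : S *ᵥ (S *ᵥ v) = v := by rw [mulVec_mulVec, hS2, one_mulVec]
    have hc2 : (ξ:ℂ)*(ξ:ℂ) = (μ:ℂ)*(μ:ℂ) - (lam:ℂ)*(lam:ℂ) := by
      have h := congrArg (Complex.ofReal) hμ2
      push_cast at h
      linear_combination -h
    by_cases hμlam : (μ:ℝ) = lam
    · -- then ξ = 0 and v itself is an eigenvector
      have hξ0 : (ξ:ℂ) = 0 := by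
        have : (μ:ℂ) = (lam:ℂ) := by exact_mod_cast hμlam
        have h0 : (ξ:ℂ)*(ξ:ℂ) = 0 := by rw [hc2, this]; ring
        exact by
          rcases mul_eq_zero.mp h0 with h|h <;> exact h
      refine ⟨v, hv0, ?_⟩
      rw [add_mulVec, smul_mulVec, hξ0, hAv]
      have : (μ:ℂ) = (lam:ℂ) := by exact_mod_cast hμlam
      rw [this]
      simp
    · set b : ℂ := (μ:ℂ) - lam with hb_def
      have hb : b ≠ 0 := sub_ne_zero.mpr (by exact_mod_cast hμlam)
      refine ⟨(ξ:ℂ) • v + b • (S *ᵥ v), ?_, ?_⟩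
      · intro hw
        have hSveq : S *ᵥ v = (-(ξ:ℂ)/b) • v := by
          have h1 : b • (S *ᵥ v) = -((ξ:ℂ) • v) := by
            rw [eq_neg_of_add_eq_zero_right hw]
          calc S *ᵥ v = (b⁻¹ * b) • (S *ᵥ v) := by rw [inv_mul_cancel₀ hb, one_smul]
            _ = b⁻¹ • (b • (S *ᵥ v)) := by rw [smul_smul]
            _ = b⁻¹ • (-((ξ:ℂ) • v)) := by rw [h1]
            _ = (-(ξ:ℂ)/b) • v := by rw [smul_neg, smul_smul, neg_div, neg_smul,
                div_eq_inv_mul]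
        set k : ℂ := -(ξ:ℂ)/b with hk_def
        have h2 : (k * lam) • v = (-(lam:ℂ) * k) • v := by
          have := hSv
          rw [hSveq] at this
          rw [mulVec_smul, hAv, smul_smul, smul_smul] at this
          exact this
        have h3 : (k * lam - (-(lam:ℂ) * k)) • v = 0 := by
          rw [sub_smul, h2, sub_self]
        have h4 : k * lam - (-(lam:ℂ) * k) = 0 := by
          rcases smul_eq_zero.mp h3 with h|h
          · exact h
          · exact absurd h hv0
        have hk0 : k = 0 := by
          have h5 : 2 * lam * k = 0 := by linear_combination h4
          rcases mul_eq_zero.mp h5 with h|h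
          · rcases mul_eq_zero.mp h with h'|h'
            · norm_num at h'
            · exact absurd h' hlam0
          · exact h
        have hSv0 : S *ᵥ v = 0 := by rw [hSveq, hk0, zero_smul]
        have : v = 0 := by rw [← hSSv, hSv0, mulVec_zero]
        exact hv0 this
      · have e1 : (ξ:ℂ)*lam + b*(ξ:ℂ) = (μ:ℂ)*(ξ:ℂ) := by rw [hb_def]; ring
        have e2 : b*(-(lam:ℂ)) + (ξ:ℂ)*(ξ:ℂ) = (μ:ℂ)*b := by
          rw [hb_def]; linear_combination hc2
        calc (A + (ξ : ℂ) • S) *ᵥ ((ξ:ℂ) • v + b • (S *ᵥ v))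
            = ((ξ:ℂ)*lam + b*(ξ:ℂ)) • v + (b*(-(lam:ℂ)) + (ξ:ℂ)*(ξ:ℂ)) • (S *ᵥ v) := by
              rw [add_mulVec, smul_mulVec, mulVec_add, mulVec_add, mulVec_smul,
                mulVec_smul, mulVec_smul, mulVec_smul, hAv, hSv, hSSv]
              module
          _ = (μ:ℂ) • ((ξ:ℂ) • v + b • (S *ᵥ v)) := by
              rw [e1, e2, smul_add, smul_smul, smul_smul]
end
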